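/- The cone of completely positive maps is self-dual under the pairing ⟨ψ, φ⟩ = s(ψ ∘ φ): a Hermitian-preserving map ψ: B(K) → B(H) satisfies ⟨ψ, φ⟩ ≥ 0 for all completely positive φ: B(H) → B(K) if and only if ψ is completely positive. -/

import Mathlib

/-!
Choi's theorem identifies completely positive maps with positive semidefinite Choi matrices `J`,
and in terms of Choi matrices the pairing reads `⟨ψ, φ⟩ = ∑ J(φ)_{(a,i),(b,j)} J(ψ)_{(i,a),(j,b)}`.
If `ψ` is CP then so is `ψ ∘ φ`, and `s(χ) = ω* J(χ) ω` for the maximally entangled vector `ω`,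
so the pairing is nonnegative. Conversely, pairing `ψ` with the CP map whose Choi matrix is the
(index-swapped) rank-one matrix `x x*` gives `x* J(ψ) x`; since `ψ` preserves Hermiticity, `J(ψ)` is
Hermitian, hence positive semidefinite.
-/

open scoped Matrix Kronecker ComplexOrder Matrix.Norms.L2Operator

noncomputable section

/-- Square complex matrices indexed by `ι`. -/
abbrev Mat (ι : Type) [Fintype ι] [DecidableEq ι] : Type := Matrix ι ι ℂ

/-- Linear maps between matrix algebras. -/
abbrev MatMap (ι κ : Type) [Fintype ι] [DecidableEq ι] [Fintype κ] [DecidableEq κ] : Type :=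
  Mat ι →ₗ[ℂ] Mat κ

variable {ι κ μ ν : Type} [Fintype ι] [DecidableEq ι] [Fintype κ] [DecidableEq κ]
  [Fintype μ] [DecidableEq μ] [Fintype ν] [DecidableEq ν]

/-- `φ ⊗ id_τ`, the amplification of `φ` with the identity on `Mat τ`. -/
def tensorId (φ : MatMap ι κ) (τ : Type) [Fintype τ] [DecidableEq τ] :
    Matrix (ι × τ) (ι × τ) ℂ →ₗ[ℂ] Matrix (κ × τ) (κ × τ) ℂ where
  toFun X := Matrix.of fun p q => φ (Matrix.of fun i j => X (i, p.2) (j, q.2)) p.1 q.1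
  map_add' X Y := by
    funext p q
    show φ (Matrix.of fun i j => (X + Y) (i, p.2) (j, q.2)) p.1 q.1 = _
    rw [show (Matrix.of fun i j => (X + Y) (i, p.2) (j, q.2))
        = (Matrix.of fun i j => X (i, p.2) (j, q.2))
          + (Matrix.of fun i j => Y (i, p.2) (j, q.2)) from rfl, map_add]
    rfl
  map_smul' c X := by
    funext p q
    show φ (Matrix.of fun i j => (c • X) (i, p.2) (j, q.2)) p.1 q.1 = _
    rw [show (Matrix.of fun i j => (c • X) (i, p.2) (j, q.2))
        = c • (Matrix.of fun i j => X (i, p.2) (j, q.2)) from rfl, map_smul]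
    rfl

/-- `φ` is Hermitian-preserving. -/
def IsHermitianPreserving (φ : MatMap ι κ) : Prop := ∀ X, (φ X)ᴴ = φ Xᴴ

/-- `φ` is completely positive: all amplifications by finite-dimensional identities
preserve positive semidefiniteness. -/
def IsCP (φ : MatMap ι κ) : Prop :=
  ∀ (l : ℕ) (X : Matrix (ι × Fin l) (ι × Fin l) ℂ), X.PosSemidef →
    (tensorId φ (Fin l) X).PosSemidef

/-- `φ` is trace-preserving. -/
def IsTP (φ : MatMap ι κ) : Prop := ∀ X, (φ X).trace = X.trace

/-- A channel is a completely positive trace-preserving map. -/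
def IsChannel (φ : MatMap ι κ) : Prop := IsCP φ ∧ IsTP φ

/-- Density operator. -/
def IsState (σ : Mat ι) : Prop := σ.PosSemidef ∧ σ.trace = 1

/-- The Choi matrix of `φ`. -/
def choiMatrix (φ : MatMap ι κ) : Matrix (κ × ι) (κ × ι) ℂ :=
  Matrix.of fun p q => φ (Matrix.single p.2 q.2 1) p.1 q.1

/-- The tracelike functional `s`. -/
def sFun (φ : MatMap ι ι) : ℂ :=
  ∑ i, ∑ j, φ (Matrix.single i j 1) i j

/-- The pairing `⟨ψ, φ⟩ = s(ψ ∘ φ)`. -/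
def pairing (ψ : MatMap κ ι) (φ : MatMap ι κ) : ℂ := sFun (ψ ∘ₗ φ)

/-- The erasure map `A ↦ Tr[A] σ`. -/
def erasure (σ : Mat κ) : MatMap ι κ :=
  (Matrix.traceLinearMap ι ℂ ℂ).smulRight σ

/-- The diamond norm, via its order-theoretic characterization. -/
noncomputable def diamondNorm (φ : MatMap ι κ) : ℝ :=
  sInf {r : ℝ | 0 < r ∧ ∃ α : MatMap ι κ, IsChannel α ∧
    IsCP ((r : ℂ) • α - φ) ∧ IsCP ((r : ℂ) • α + φ)}

/-- The dual diamond norm, via its order-theoretic characterization. -/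
noncomputable def dualDiamondNorm (ψ : MatMap ι κ) : ℝ :=
  sInf {r : ℝ | 0 < r ∧ ∃ σ : Mat κ, IsState σ ∧
    IsCP ((r : ℂ) • erasure (ι := ι) σ - ψ) ∧ IsCP ((r : ℂ) • erasure (ι := ι) σ + ψ)}

/-- The Hilbert–Schmidt (trace-duality) adjoint of `ψ`. -/
def adjointMap (ψ : MatMap ι κ) : MatMap κ ι where
  toFun A := Matrix.of fun i j => (A * ψ (Matrix.single j i 1)).trace
  map_add' A B := by funext i j; simp [Matrix.add_mul]
  map_smul' c A := by funext i j; simp [Matrix.smul_mul]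

/-- The cq-map associated with a family of operators. -/
def cqMap {n : ℕ} (A : Fin n → Mat ι) : MatMap (Fin n) ι where
  toFun X := ∑ i, X i i • A i
  map_add' X Y := by simp [Matrix.add_apply, add_smul, Finset.sum_add_distrib]
  map_smul' c X := by simp [Matrix.smul_apply, smul_smul, Finset.smul_sum]

/-- The qc-map associated with a family of operators. -/
def qcMap {n : ℕ} (B : Fin n → Mat ι) : MatMap ι (Fin n) where
  toFun X := Matrix.diagonal fun i => (X * B i).trace
  map_add' X Y := by
    funext i j
    by_cases h : i = j <;>
      simp [Matrix.add_mul, Matrix.diagonal, Matrix.of_apply, h]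
  map_smul' c X := by
    funext i j
    by_cases h : i = j <;>
      simp [Matrix.smul_mul, Matrix.diagonal, Matrix.of_apply, h]

/-- A POVM with `n` outcomes. -/
def IsPOVM {n : ℕ} (M : Fin n → Mat ι) : Prop :=
  (∀ i, (M i).PosSemidef) ∧ ∑ i, M i = 1

/-- An ensemble: probabilities with states. -/
def IsEnsemble {n : ℕ} (lam : Fin n → ℝ) (σ : Fin n → Mat ι) : Prop :=
  (∀ i, 0 < lam i) ∧ (∑ i, lam i = 1) ∧ ∀ i, IsState (σ i)

/-- Optimal success probability of guessing among the states of an ensemble. -/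
noncomputable def pSucc {n : ℕ} (lam : Fin n → ℝ) (σ : Fin n → Mat ι) : ℝ :=
  sSup {r : ℝ | ∃ M : Fin n → Mat ι, IsPOVM M ∧
    r = ∑ i, lam i * ((M i * σ i).trace).re}

/-- Square root of a positive semidefinite matrix (removed from Mathlib; old definition). -/
def Matrix.PosSemidef.sqrt {n 𝕜 : Type*} [Fintype n] [DecidableEq n] [RCLike 𝕜]
    {A : Matrix n n 𝕜} (hA : A.PosSemidef) : Matrix n n 𝕜 :=
  hA.1.eigenvectorUnitary.1 * Matrix.diagonal ((↑) ∘ Real.sqrt ∘ hA.1.eigenvalues) *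
    (star hA.1.eigenvectorUnitary : Matrix n n 𝕜)

/-- Trace norm `‖A‖₁ = Tr √(AᴴA)`. -/
noncomputable def traceNorm (A : Mat ι) : ℝ :=
  ((Matrix.posSemidef_conjTranspose_mul_self A).sqrt).trace.re

/-- Le Cam deficiency of `Φ` with respect to `Ψ`. -/
noncomputable def deficiency (Φ : MatMap ι κ) (Ψ : MatMap ι μ) : ℝ :=
  sInf {r : ℝ | ∃ α : MatMap μ κ, IsChannel α ∧ r = diamondNorm (Φ - α ∘ₗ Ψ)}

open Matrix

lemma apply_eq_sum_choiMatrix (φ : MatMap ι κ) (A : Mat ι) (a b : κ) :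
    φ A a b = ∑ i, ∑ j, A i j * choiMatrix φ (a, i) (b, j) := by
  conv_lhs => rw [matrix_eq_sum_single A]
  simp only [map_sum, Matrix.sum_apply]
  refine Finset.sum_congr rfl fun i _ => Finset.sum_congr rfl fun j _ => ?_
  rw [show single i j (A i j) = A i j • single i j 1 by simp [smul_single], map_smul]
  rfl

lemma tensorId_apply_eq_sum_choiMatrix (φ : MatMap ι κ) {τ : Type} [Fintype τ] [DecidableEq τ]
    (X : Matrix (ι × τ) (ι × τ) ℂ) (p q : κ × τ) :
    tensorId φ τ X p q = ∑ i, ∑ j, X (i, p.2) (j, q.2) * choiMatrix φ (p.1, i) (q.1, j) :=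
  apply_eq_sum_choiMatrix φ _ p.1 q.1

def choiContraction (ι κ τ : Type) [DecidableEq ι] [DecidableEq κ] [DecidableEq τ] :
    Matrix ((κ × ι) × (ι × τ)) (κ × τ) ℂ :=
  of fun s r => if s.1.1 = r.1 ∧ s.1.2 = s.2.1 ∧ s.2.2 = r.2 then 1 else 0

lemma tensorId_eq_conjTranspose_mul_kronecker_mul (φ : MatMap ι κ) {τ : Type} [Fintype τ]
    [DecidableEq τ] (X : Matrix (ι × τ) (ι × τ) ℂ) :
    tensorId φ τ X = (choiContraction ι κ τ)ᴴ * (choiMatrix φ ⊗ₖ X) * choiContraction ι κ τ := by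
  ext ⟨a, p⟩ ⟨b, q⟩
  rw [tensorId_apply_eq_sum_choiMatrix, Finset.sum_comm]
  simp [choiContraction, mul_apply, kroneckerMap_apply, Fintype.sum_prod_type, ite_and,
    apply_ite (starRingEnd ℂ), Finset.sum_ite_eq, Finset.sum_ite_eq', mul_comm]

lemma isCP_of_choiMatrix_posSemidef {φ : MatMap ι κ} (hφ : (choiMatrix φ).PosSemidef) :
    IsCP φ := fun l X hX => by
  rw [tensorId_eq_conjTranspose_mul_kronecker_mul]
  exact (hφ.kronecker hX).conjTranspose_mul_mul_same _

lemma IsCP.tensorId_posSemidef {φ : MatMap ι κ} (hφ : IsCP φ) (τ : Type) [Fintype τ]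
    [DecidableEq τ] {X : Matrix (ι × τ) (ι × τ) ℂ} (hX : X.PosSemidef) :
    (tensorId φ τ X).PosSemidef := by
  let e := Fintype.equivFin τ
  -- relabelling the ancilla by `e` commutes with the amplification definitionally
  rw [← posSemidef_submatrix_equiv ((Equiv.refl κ).prodCongr e.symm)]
  exact hφ _ _ (hX.submatrix ((Equiv.refl ι).prodCongr e.symm))

lemma IsCP.comp {ψ : MatMap κ μ} {φ : MatMap ι κ} (hψ : IsCP ψ) (hφ : IsCP φ) :
    IsCP (ψ ∘ₗ φ) :=
  fun l X hX => hψ l _ (hφ l X hX)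

/-- The unnormalized maximally entangled vector `∑ᵢ eᵢ ⊗ eᵢ`. -/
def maxEntangledVec (ι : Type) [DecidableEq ι] : ι × ι → ℂ := fun p => (1 : Matrix ι ι ℂ) p.1 p.2

lemma choiMatrix_eq_tensorId (φ : MatMap ι κ) :
    choiMatrix φ = tensorId φ ι (vecMulVec (star (maxEntangledVec ι)) (maxEntangledVec ι)) := by
  ext ⟨a, i⟩ ⟨b, j⟩
  rw [tensorId_apply_eq_sum_choiMatrix]
  simp [maxEntangledVec, vecMulVec_apply, one_apply]

lemma IsCP.choiMatrix_posSemidef {φ : MatMap ι κ} (hφ : IsCP φ) : (choiMatrix φ).PosSemidef := by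
  rw [choiMatrix_eq_tensorId]
  exact hφ.tensorId_posSemidef ι (posSemidef_vecMulVec_star_self _)

lemma sFun_eq_dotProduct_choiMatrix (χ : MatMap ι ι) :
    sFun χ = star (maxEntangledVec ι) ⬝ᵥ (choiMatrix χ *ᵥ maxEntangledVec ι) := by
  simp [sFun, maxEntangledVec, dotProduct, mulVec, Fintype.sum_prod_type, one_apply, choiMatrix]

lemma IsCP.sFun_nonneg {χ : MatMap ι ι} (hχ : IsCP χ) : 0 ≤ sFun χ := by
  rw [sFun_eq_dotProduct_choiMatrix]
  exact hχ.choiMatrix_posSemidef.dotProduct_mulVec_nonneg _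

lemma IsHermitianPreserving.choiMatrix_isHermitian {φ : MatMap ι κ}
    (hφ : IsHermitianPreserving φ) : (choiMatrix φ).IsHermitian := by
  ext ⟨a, i⟩ ⟨b, j⟩
  have hsingle : (single j i (1 : ℂ))ᴴ = single i j 1 := by
    ext
    simp [single, conjTranspose_apply, and_comm, apply_ite (star : ℂ → ℂ)]
  simp only [conjTranspose_apply, choiMatrix, of_apply]
  rw [← conjTranspose_apply (φ _), hφ, hsingle]

def ofChoiMatrix (N : Matrix (κ × ι) (κ × ι) ℂ) : MatMap ι κ where
  toFun X := of fun a b => ∑ i, ∑ j, X i j * N (a, i) (b, j)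
  map_add' X Y := by
    ext a b
    simp [add_mul, Finset.sum_add_distrib]
  map_smul' c X := by
    ext a b
    simp [Finset.mul_sum, mul_assoc]

lemma choiMatrix_ofChoiMatrix (N : Matrix (κ × ι) (κ × ι) ℂ) :
    choiMatrix (ofChoiMatrix N) = N := by
  ext ⟨a, i⟩ ⟨b, j⟩
  simp [choiMatrix, ofChoiMatrix, single, ite_and]

lemma pairing_eq_sum_choiMatrix (ψ : MatMap κ ι) (φ : MatMap ι κ) :
    pairing ψ φ = ∑ p : ι × κ, ∑ q : ι × κ,
      choiMatrix φ p.swap q.swap * choiMatrix ψ p q := by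
  simp only [pairing, sFun, LinearMap.comp_apply, apply_eq_sum_choiMatrix ψ, Fintype.sum_prod_type]
  refine Finset.sum_congr rfl fun i _ => ?_
  rw [Finset.sum_comm]
  rfl

lemma pairing_ofChoiMatrix_vecMulVec (ψ : MatMap κ ι) (x : ι × κ → ℂ) :
    pairing ψ (ofChoiMatrix ((vecMulVec (star x) x).submatrix Prod.swap Prod.swap))
      = star x ⬝ᵥ (choiMatrix ψ *ᵥ x) := by
  simp [pairing_eq_sum_choiMatrix, choiMatrix_ofChoiMatrix, dotProduct, mulVec, vecMulVec_apply,
    Finset.mul_sum, mul_comm, mul_left_comm, mul_assoc]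

theorem cp_cone_selfdual {h k : ℕ} (ψ : MatMap (Fin k) (Fin h))
    (hψ : IsHermitianPreserving ψ) :
    (∀ φ : MatMap (Fin h) (Fin k), IsCP φ → 0 ≤ pairing ψ φ) ↔ IsCP ψ := by
  refine ⟨fun hpos => ?_, fun hψcp φ hφ => (hψcp.comp hφ).sFun_nonneg⟩
  refine isCP_of_choiMatrix_posSemidef <|
    .of_dotProduct_mulVec_nonneg hψ.choiMatrix_isHermitian fun x => ?_
  rw [← pairing_ofChoiMatrix_vecMulVec]
  refine hpos _ (isCP_of_choiMatrix_posSemidef ?_)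
  rw [choiMatrix_ofChoiMatrix]
  exact (posSemidef_vecMulVec_star_self x).submatrix _
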